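/- arXiv:1810.08483 — 2 statements merged into one kernel-verified Lean document; each statement's English description precedes it below -/
import Mathlib

section
/- Let m ≥ 2 and b > 0 satisfy b(b - m + 2) ≤ -(m - 1). Then for all s > t > 0 and real numbers A', B' with A' ≥ 0 ≥ B' and A' + B' ≥ 0, we have b(b-m+2)(t^{-b-2}A' - s^{-b-2}B') + (m-1)(t^{-b}s^{-2}A' - s^{-b}t^{-2}B') ≤ (m-1)(-B')(s^{-b} - t^{-b})(t^{-2} - s^{-2}) ≤ 0. -/
/-- the core algebraic estimate in the stability proof for
dimensions `2m ≥ 14`.  With `A'` playing the role of `u_s ≥ 0`, `B'` that of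
`u_t ≤ 0`, `A' + B' ≥ 0` (monotonicity `u_y ≥ 0`), `s > t > 0`, `b > 0` and
`b(b-m+2) ≤ -(m-1)`, the combination arising from `div(λ^a ∇φ)` with
`φ = t^{-b}u_s - s^{-b}u_t` is bounded by
`(m-1)(-B')(s^{-b}-t^{-b})(t^{-2}-s^{-2}) ≤ 0`. -/
theorem stability_key_estimate (m : ℕ) (hm : 2 ≤ m) (b : ℝ) (hb : 0 < b)
    (hbm : b * (b - (m : ℝ) + 2) ≤ -((m : ℝ) - 1))
    (s t : ℝ) (ht : 0 < t) (hts : t < s)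
    (A' B' : ℝ) (hA : 0 ≤ A') (hB : B' ≤ 0) (hAB : 0 ≤ A' + B') :
    b * (b - (m : ℝ) + 2) * (t ^ (-b - 2) * A' - s ^ (-b - 2) * B')
        + ((m : ℝ) - 1) * (t ^ (-b) * s ^ (-2 : ℝ) * A' - s ^ (-b) * t ^ (-2 : ℝ) * B')
      ≤ ((m : ℝ) - 1) * (-B') * (s ^ (-b) - t ^ (-b)) * (t ^ (-2 : ℝ) - s ^ (-2 : ℝ)) ∧
    ((m : ℝ) - 1) * (-B') * (s ^ (-b) - t ^ (-b)) * (t ^ (-2 : ℝ) - s ^ (-2 : ℝ)) ≤ 0 := by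

  have hs : 0 < s := ht.trans hts
  have hP : 0 < t ^ (-b) := Real.rpow_pos_of_pos ht _
  have hQ : 0 < s ^ (-b) := Real.rpow_pos_of_pos hs _
  have hX : 0 < t ^ (-2 : ℝ) := Real.rpow_pos_of_pos ht _
  have hY : 0 < s ^ (-2 : ℝ) := Real.rpow_pos_of_pos hs _
  have hPQ : s ^ (-b) < t ^ (-b) := Real.rpow_lt_rpow_of_neg ht hts (by linarith)
  have hXY : s ^ (-2 : ℝ) < t ^ (-2 : ℝ) := Real.rpow_lt_rpow_of_neg ht hts (by norm_num)
  have hM : (1 : ℝ) ≤ (m : ℝ) - 1 := by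
    have : (2 : ℝ) ≤ (m : ℝ) := by exact_mod_cast hm
    linarith
  have h1 : t ^ (-b - 2) = t ^ (-b) * t ^ (-2 : ℝ) := by
    rw [← Real.rpow_add ht]; ring_nf
  have h2 : s ^ (-b - 2) = s ^ (-b) * s ^ (-2 : ℝ) := by
    rw [← Real.rpow_add hs]; ring_nf
  rw [h1, h2]
  set P := t ^ (-b)
  set Q := s ^ (-b)
  set X := t ^ (-2 : ℝ)
  set Y := s ^ (-2 : ℝ)
  set k := b * (b - (m : ℝ) + 2) with hk
  set M := (m : ℝ) - 1 with hMdef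
  have hkM : k ≤ -M := hbm
  constructor
  · nlinarith [mul_nonneg (mul_pos hP hX).le (by nlinarith : 0 ≤ -(k * A' - M * B') - M * (A' + B')),
      mul_nonneg (mul_pos hQ hY).le (by nlinarith : 0 ≤ (k + M) * B'),
      mul_nonneg (mul_nonneg (by linarith : (0:ℝ) ≤ M) hAB) (mul_pos hP (by linarith : (0:ℝ) < X - Y)).le]
  · nlinarith [mul_nonneg (mul_nonneg (mul_nonneg (by linarith : (0:ℝ) ≤ M) (by linarith : 0 ≤ -B')) (by linarith : 0 ≤ P - Q)) (by linarith : 0 ≤ X - Y)]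
end

section
/- Let β > 0 solve β(β + n - 2) = μ, let φ be a smooth positive function on an open subset of S^{n-1} with Δ_{S^{n-1}} φ = -μφ, and let γ ∈ (0,1), a = 1-2γ. Then ψ(x,λ) := (1 + λ^{2γ})|x|^β φ(x/|x|) satisfies div(λ^a ∇ψ) = 0 on the set where it is defined (x ≠ 0, λ > 0). -/
/-- Partial derivative in the `i`-th coordinate direction of `ℝⁿ`. -/
noncomputable def pdE {n : ℕ} (i : Fin n) (u : EuclideanSpace ℝ (Fin n) → ℝ)
    (p : EuclideanSpace ℝ (Fin n)) : ℝ :=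
  fderiv ℝ u p (EuclideanSpace.single i 1)

/-- The Laplacian on `ℝⁿ`, as a sum of pure second partial derivatives. -/
noncomputable def lapE {n : ℕ} (u : EuclideanSpace ℝ (Fin n) → ℝ)
    (p : EuclideanSpace ℝ (Fin n)) : ℝ :=
  ∑ i, pdE i (pdE i u) p

/-- Horizontal partial derivative of a function on `ℝⁿ × (0,∞)`. -/
noncomputable def pdx {n : ℕ} (i : Fin n) (u : EuclideanSpace ℝ (Fin n) × ℝ → ℝ)
    (p : EuclideanSpace ℝ (Fin n) × ℝ) : ℝ :=
  fderiv ℝ (fun y => u (y, p.2)) p.1 (EuclideanSpace.single i 1)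

/-- Vertical (extension-variable) partial derivative on `ℝⁿ × (0,∞)`. -/
noncomputable def pdl {n : ℕ} (u : EuclideanSpace ℝ (Fin n) × ℝ → ℝ)
    (p : EuclideanSpace ℝ (Fin n) × ℝ) : ℝ :=
  deriv (fun s => u (p.1, s)) p.2

/-- The operator `div(λ^a ∇·)` on `ℝⁿ × (0,∞)`, in all `n+1` variables. -/
noncomputable def divExt {n : ℕ} (a : ℝ) (u : EuclideanSpace ℝ (Fin n) × ℝ → ℝ)
    (p : EuclideanSpace ℝ (Fin n) × ℝ) : ℝ :=
  (∑ i, pdx i (fun q => q.2 ^ a * pdx i u q) p)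
    + pdl (fun q => q.2 ^ a * pdl u q) p

section aux
variable {n : ℕ}

lemma diff_homog {δ : ℝ} {v : EuclideanSpace ℝ (Fin n) → ℝ}
    (hv : ∀ c : ℝ, 0 < c → ∀ y, v (c • y) = c ^ δ * v y)
    {c : ℝ} (hc : 0 < c) {y : EuclideanSpace ℝ (Fin n)}
    (h : DifferentiableAt ℝ v y) : DifferentiableAt ℝ v (c • y) := by
  have hne : (c : ℝ) ^ δ ≠ 0 := (Real.rpow_pos_of_pos hc δ).ne'
  have hveq : v = fun w => c ^ δ * v (c⁻¹ • w) := by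
    funext w
    rw [hv c⁻¹ (by positivity) w, Real.inv_rpow hc.le, ← mul_assoc,
      mul_inv_cancel₀ hne, one_mul]
  rw [hveq]
  have hf : DifferentiableAt ℝ (fun w : EuclideanSpace ℝ (Fin n) => c⁻¹ • w) (c • y) :=
    differentiableAt_id.const_smul c⁻¹
  have h2 : DifferentiableAt ℝ v ((fun w : EuclideanSpace ℝ (Fin n) => c⁻¹ • w) (c • y)) := by
    simpa [smul_smul, inv_mul_cancel₀ hc.ne'] using h
  exact (h2.comp (c • y) hf).const_mul _

lemma pd_homog {δ : ℝ} {v : EuclideanSpace ℝ (Fin n) → ℝ}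
    (hv : ∀ c : ℝ, 0 < c → ∀ y, v (c • y) = c ^ δ * v y)
    {c : ℝ} (hc : 0 < c) (y : EuclideanSpace ℝ (Fin n)) (i : Fin n) :
    pdE i v (c • y) = c ^ (δ - 1) * pdE i v y := by
  have hcd : (c : ℝ) ^ (δ - 1) = c ^ δ / c := by
    rw [Real.rpow_sub hc, Real.rpow_one]
  by_cases h : DifferentiableAt ℝ v (c • y)
  · have hy : DifferentiableAt ℝ v y := by
      have := diff_homog hv (c := c⁻¹) (by positivity) h
      simpa [smul_smul, inv_mul_cancel₀ hc.ne'] using this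
    -- chain rule
    have hsm : HasFDerivAt (fun z : EuclideanSpace ℝ (Fin n) => c • z)
        (c • ContinuousLinearMap.id ℝ (EuclideanSpace ℝ (Fin n))) y :=
      (hasFDerivAt_id y).const_smul c
    have hcomp : HasFDerivAt (fun z => v (c • z))
        ((fderiv ℝ v (c • y)).comp (c • ContinuousLinearMap.id ℝ (EuclideanSpace ℝ (Fin n)))) y :=
      HasFDerivAt.comp y h.hasFDerivAt hsm
    have heq : (fun z : EuclideanSpace ℝ (Fin n) => v (c • z)) = fun z => c ^ δ * v z := by
      funext z; exact hv c hc z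
    have hconst : HasFDerivAt (fun z => c ^ δ * v z) (c ^ δ • fderiv ℝ v y) y :=
      hy.hasFDerivAt.const_mul _
    rw [heq] at hcomp
    have := hcomp.unique hconst
    have happ := DFunLike.congr_fun this (EuclideanSpace.single i 1)
    simp only [ContinuousLinearMap.coe_comp', Function.comp_apply,
      ContinuousLinearMap.smul_apply, ContinuousLinearMap.coe_id', id_eq,
      ContinuousLinearMap.coe_smul'] at happ
    -- happ : fderiv v (c•y) (c • single i 1) = c^δ • fderiv v y (single i 1)
    simp only [ContinuousLinearMap.smul_apply, ContinuousLinearMap.coe_id', id_eq, Pi.smul_apply,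
      map_smul, smul_eq_mul] at happ
    unfold pdE
    rw [hcd]
    field_simp
    linarith [happ]
  · have hy : ¬ DifferentiableAt ℝ v y := by
      intro hy; exact h (diff_homog hv hc hy)
    unfold pdE
    rw [fderiv_zero_of_not_differentiableAt h, fderiv_zero_of_not_differentiableAt hy]
    simp

end aux

section aux2
variable {n : ℕ}

lemma norm_sq_eq (y : EuclideanSpace ℝ (Fin n)) : ‖y‖ ^ (2:ℕ) = ∑ j, y j ^ 2 := by
  rw [EuclideanSpace.norm_eq, Real.sq_sqrt (by positivity)]
  simp [Real.norm_eq_abs, sq_abs]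

lemma norm_rpow_eq (δ : ℝ) (y : EuclideanSpace ℝ (Fin n)) :
    ‖y‖ ^ δ = (∑ j, y j ^ 2) ^ (δ / 2) := by
  rw [← norm_sq_eq, ← Real.rpow_natCast ‖y‖ 2, ← Real.rpow_mul (norm_nonneg y)]
  norm_num
  congr 1
  ring

lemma eval_sumproj (y : EuclideanSpace ℝ (Fin n)) (i : Fin n) :
    (∑ j, y j • (EuclideanSpace.proj j : EuclideanSpace ℝ (Fin n) →L[ℝ] ℝ))
      (EuclideanSpace.single i 1) = y i := by
  simp only [ContinuousLinearMap.coe_sum', Finset.sum_apply, ContinuousLinearMap.coe_smul',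
    Pi.smul_apply, PiLp.proj_apply, EuclideanSpace.single_apply, smul_eq_mul]
  simp [Finset.sum_ite_eq']

lemma hasFDerivAt_normrpow (δ : ℝ) {y : EuclideanSpace ℝ (Fin n)} (hy : y ≠ 0) :
    HasFDerivAt (fun z : EuclideanSpace ℝ (Fin n) => ‖z‖ ^ δ)
      ((δ * ‖y‖ ^ (δ - 2)) • ∑ j, y j • (EuclideanSpace.proj j : EuclideanSpace ℝ (Fin n) →L[ℝ] ℝ)) y := by
  have hQpos : (0:ℝ) < ∑ j, y j ^ 2 := by
    have hny : 0 < ‖y‖ := norm_pos_iff.mpr hy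
    rw [← norm_sq_eq]; positivity
  have hQ : HasFDerivAt (fun z : EuclideanSpace ℝ (Fin n) => ∑ j, z j ^ 2)
      (∑ j, (2 * y j) • (EuclideanSpace.proj j : EuclideanSpace ℝ (Fin n) →L[ℝ] ℝ)) y := by
    refine HasFDerivAt.fun_sum fun j _ => ?_
    have hp : HasFDerivAt (fun z : EuclideanSpace ℝ (Fin n) => z j)
        (EuclideanSpace.proj j : EuclideanSpace ℝ (Fin n) →L[ℝ] ℝ) y :=
      (EuclideanSpace.proj j : EuclideanSpace ℝ (Fin n) →L[ℝ] ℝ).hasFDerivAt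
    have := hp.fun_mul hp
    have h2 : (fun z : EuclideanSpace ℝ (Fin n) => z j * z j) = fun z => z j ^ 2 := by
      funext z; ring
    rw [h2] at this
    rw [two_mul, add_smul]
    exact this
  have hr : HasFDerivAt (fun z : EuclideanSpace ℝ (Fin n) => (∑ j, z j ^ 2) ^ (δ / 2))
      ((δ / 2 * (∑ j, y j ^ 2) ^ (δ / 2 - 1)) • ∑ j, (2 * y j) • (EuclideanSpace.proj j : EuclideanSpace ℝ (Fin n) →L[ℝ] ℝ)) y :=
    hQ.rpow_const (Or.inl hQpos.ne')
  have heq : (fun z : EuclideanSpace ℝ (Fin n) => ‖z‖ ^ δ)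
      = fun z => (∑ j, z j ^ 2) ^ (δ / 2) := funext fun z => norm_rpow_eq δ z
  rw [heq]
  convert hr using 1
  have h1 : (∑ j, y j ^ 2 : ℝ) ^ (δ / 2 - 1) = ‖y‖ ^ (δ - 2) := by
    rw [norm_rpow_eq (δ - 2) y]; ring_nf
  rw [h1]
  rw [Finset.smul_sum, Finset.smul_sum]
  refine Finset.sum_congr rfl fun j _ => ?_
  rw [smul_smul, smul_smul]
  ring_nf

end aux2

section aux3
variable {n : ℕ}

lemma sum_coord_single (θ : EuclideanSpace ℝ (Fin n)) :
    ∑ i, θ i • EuclideanSpace.single i (1:ℝ) = θ := by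
  simpa [EuclideanSpace.basisFun_apply, EuclideanSpace.basisFun_repr]
    using (EuclideanSpace.basisFun (Fin n) ℝ).sum_repr θ

lemma euler_zero {Φ : EuclideanSpace ℝ (Fin n) → ℝ}
    (hΦhom : ∀ c : ℝ, 0 < c → ∀ y, Φ (c • y) = Φ y)
    {θ : EuclideanSpace ℝ (Fin n)} (hθ : DifferentiableAt ℝ Φ θ) :
    fderiv ℝ Φ θ θ = 0 := by
  have hsm : HasDerivAt (fun c : ℝ => c • θ) θ 1 := by
    simpa using (hasDerivAt_id (1:ℝ)).smul_const θ
  have hθ' : HasFDerivAt Φ (fderiv ℝ Φ θ) ((fun c : ℝ => c • θ) 1) := by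
    simpa using hθ.hasFDerivAt
  have hcomp : HasDerivAt (fun c : ℝ => Φ (c • θ)) (fderiv ℝ Φ θ θ) 1 :=
    hθ'.comp_hasDerivAt 1 hsm
  have hev : (fun c : ℝ => Φ (c • θ)) =ᶠ[nhds 1] fun _ => Φ θ := by
    filter_upwards [isOpen_Ioi.mem_nhds (by norm_num : (1:ℝ) ∈ Set.Ioi 0)] with c hc
    rw [hΦhom c hc θ]
  have hconst : HasDerivAt (fun _ : ℝ => Φ θ) (fderiv ℝ Φ θ θ) 1 :=
    hcomp.congr_of_eventuallyEq hev.symm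
  have := hconst.unique (hasDerivAt_const 1 (Φ θ))
  exact this

lemma euler_sum {Φ : EuclideanSpace ℝ (Fin n) → ℝ}
    (hΦhom : ∀ c : ℝ, 0 < c → ∀ y, Φ (c • y) = Φ y)
    {θ : EuclideanSpace ℝ (Fin n)} (hθ : DifferentiableAt ℝ Φ θ) :
    ∑ i, θ i * pdE i Φ θ = 0 := by
  have h0 := euler_zero hΦhom hθ
  calc ∑ i, θ i * pdE i Φ θ = fderiv ℝ Φ θ (∑ i, θ i • EuclideanSpace.single i 1) := by
        rw [map_sum]
        exact Finset.sum_congr rfl fun i _ => by rw [map_smul]; rfl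
    _ = 0 := by rw [sum_coord_single θ, h0]

end aux3

section aux4
variable {n : ℕ}

lemma Phi_hom (φ : EuclideanSpace ℝ (Fin n) → ℝ) :
    ∀ c : ℝ, 0 < c → ∀ y, φ (‖c • y‖⁻¹ • (c • y)) = φ (‖y‖⁻¹ • y) := by
  intro c hc y
  by_cases hy : y = 0
  · simp [hy]
  · congr 1
    rw [norm_smul, Real.norm_eq_abs, abs_of_pos hc, smul_smul]
    congr 1
    have : ‖y‖ ≠ 0 := norm_ne_zero_iff.mpr hy
    field_simp

lemma u_hom (φ : EuclideanSpace ℝ (Fin n) → ℝ) (β : ℝ) :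
    ∀ c : ℝ, 0 < c → ∀ y, ‖c • y‖ ^ β * φ (‖c • y‖⁻¹ • (c • y))
      = c ^ β * (‖y‖ ^ β * φ (‖y‖⁻¹ • y)) := by
  intro c hc y
  rw [Phi_hom φ c hc y, norm_smul, Real.norm_eq_abs, abs_of_pos hc,
    Real.mul_rpow hc.le (norm_nonneg y), mul_assoc]

lemma pdE_phi_diff {φ : EuclideanSpace ℝ (Fin n) → ℝ} {U : Set (EuclideanSpace ℝ (Fin n))}
    (hU : IsOpen U) (hφsmooth : ContDiffOn ℝ (⊤ : ℕ∞) (fun x => φ (‖x‖⁻¹ • x)) U)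
    {θ : EuclideanSpace ℝ (Fin n)} (hθU : θ ∈ U) (i : Fin n) :
    DifferentiableAt ℝ (pdE i (fun x => φ (‖x‖⁻¹ • x))) θ := by
  have hC : ContDiffAt ℝ (⊤ : ℕ∞) (fun x => φ (‖x‖⁻¹ • x)) θ := hφsmooth.contDiffAt (hU.mem_nhds hθU)
  have hf : ContDiffAt ℝ 1 (fderiv ℝ (fun x => φ (‖x‖⁻¹ • x))) θ :=
    hC.fderiv_right (by exact WithTop.coe_le_coe.mpr le_top)
  exact ((hf.clm_apply contDiffAt_const).differentiableAt one_ne_zero)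

lemma lap_u_unit {β μ : ℝ} (hβμ : β * (β + (n:ℝ) - 2) = μ)
    {U : Set (EuclideanSpace ℝ (Fin n))} (hU : IsOpen U)
    (hU0 : (0 : EuclideanSpace ℝ (Fin n)) ∉ U)
    {φ : EuclideanSpace ℝ (Fin n) → ℝ}
    (hφsmooth : ContDiffOn ℝ (⊤ : ℕ∞) (fun x => φ (‖x‖⁻¹ • x)) U)
    (hφeig : ∀ θ ∈ U, ‖θ‖ = 1 → lapE (fun x => φ (‖x‖⁻¹ • x)) θ = -μ * φ θ)
    {θ : EuclideanSpace ℝ (Fin n)} (hθU : θ ∈ U) (hθ1 : ‖θ‖ = 1) :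
    lapE (fun y => ‖y‖ ^ β * φ (‖y‖⁻¹ • y)) θ = 0 := by
  have hθ0 : θ ≠ 0 := fun h => hU0 (h ▸ hθU)
  set Φ : EuclideanSpace ℝ (Fin n) → ℝ := fun x => φ (‖x‖⁻¹ • x) with hΦdef
  set u : EuclideanSpace ℝ (Fin n) → ℝ := fun y => ‖y‖ ^ β * Φ y with hudef
  have hΦat : ∀ y ∈ U, ContDiffAt ℝ (⊤ : ℕ∞) Φ y := fun y hy => hφsmooth.contDiffAt (hU.mem_nhds hy)
  -- Step A : formula for pdE i u on U
  have hA : ∀ i : Fin n, ∀ y ∈ U, pdE i u y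
      = β * ‖y‖ ^ (β - 2) * y i * Φ y + ‖y‖ ^ β * pdE i Φ y := by
    intro i y hy
    have hy0 : y ≠ 0 := fun h => hU0 (h ▸ hy)
    have hN := hasFDerivAt_normrpow β hy0
    have hΦd : DifferentiableAt ℝ Φ y := (hΦat y hy).differentiableAt (by simp)
    have hmul := hN.fun_mul hΦd.hasFDerivAt
    have := hmul.fderiv
    unfold pdE
    rw [this]
    simp only [ContinuousLinearMap.add_apply, ContinuousLinearMap.smul_apply,
      smul_eq_mul, eval_sumproj]
    ring
  -- Step B : second derivative at θ
  have hB : ∀ i : Fin n, pdE i (pdE i u) θ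
      = β * ((β - 2) * (θ i * θ i) + 1) * Φ θ + 2 * β * θ i * pdE i Φ θ
        + pdE i (pdE i Φ) θ := by
    intro i
    have hev : pdE i u =ᶠ[nhds θ]
        fun y => β * (‖y‖ ^ (β - 2) * y i) * Φ y + ‖y‖ ^ β * pdE i Φ y := by
      filter_upwards [hU.mem_nhds hθU] with y hy
      rw [hA i y hy]; ring
    have hfe : fderiv ℝ (pdE i u) θ = fderiv ℝ (fun y => β * (‖y‖ ^ (β - 2) * y i) * Φ y + ‖y‖ ^ β * pdE i Φ y) θ := hev.fderiv_eq
    -- derivative of the explicit formula at θ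
    have h1 := hasFDerivAt_normrpow (β - 2) hθ0
    have hci : HasFDerivAt (fun y : EuclideanSpace ℝ (Fin n) => y i)
        (EuclideanSpace.proj i : EuclideanSpace ℝ (Fin n) →L[ℝ] ℝ) θ :=
      (EuclideanSpace.proj i : EuclideanSpace ℝ (Fin n) →L[ℝ] ℝ).hasFDerivAt
    have hΦd : DifferentiableAt ℝ Φ θ := (hΦat θ hθU).differentiableAt (by simp)
    have hDΦ : DifferentiableAt ℝ (pdE i Φ) θ := pdE_phi_diff hU hφsmooth hθU i
    have t1 := (h1.fun_mul hci).const_mul β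
    have t2 := t1.fun_mul hΦd.hasFDerivAt
    have t3 := (hasFDerivAt_normrpow β hθ0).fun_mul hDΦ.hasFDerivAt
    have t4 := t2.fun_add t3
    have hfd := t4.fderiv
    show fderiv ℝ (pdE i u) θ (EuclideanSpace.single i 1) = _
    rw [hfe, hfd]
    simp only [ContinuousLinearMap.add_apply, ContinuousLinearMap.smul_apply,
      ContinuousLinearMap.comp_apply, smul_eq_mul, eval_sumproj, PiLp.proj_apply,
      EuclideanSpace.single_apply, if_pos rfl, hθ1, Real.one_rpow]
    show _ = β * ((β - 2) * (θ i * θ i) + 1) * Φ θ + 2 * β * θ i * (fderiv ℝ Φ θ (EuclideanSpace.single i 1))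
        + fderiv ℝ (pdE i Φ) θ (EuclideanSpace.single i 1)
    simp only [if_true, pdE]
    ring
  -- sum up
  have hsum : lapE u θ = ∑ i, (β * ((β - 2) * (θ i * θ i) + 1) * Φ θ
      + 2 * β * θ i * pdE i Φ θ + pdE i (pdE i Φ) θ) := by
    unfold lapE
    exact Finset.sum_congr rfl fun i _ => hB i
  have hnormsum : ∑ i, θ i * θ i = 1 := by
    have := norm_sq_eq θ
    rw [hθ1] at this
    simpa [sq] using this.symm
  have heuler : ∑ i, θ i * pdE i Φ θ = 0 :=
    euler_sum (fun c hc y => Phi_hom φ c hc y) ((hΦat θ hθU).differentiableAt (by simp))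
  have heig : ∑ i, pdE i (pdE i Φ) θ = -μ * φ θ := hφeig θ hθU hθ1
  rw [hsum]
  rw [Finset.sum_add_distrib, Finset.sum_add_distrib]
  have e1 : ∑ i : Fin n, β * ((β - 2) * (θ i * θ i) + 1) * Φ θ
      = β * ((β - 2) + (n:ℝ)) * Φ θ := by
    rw [← Finset.sum_mul, ← Finset.mul_sum]
    congr 2
    rw [Finset.sum_add_distrib, ← Finset.mul_sum, hnormsum]
    simp
  have e2 : ∑ i : Fin n, 2 * β * θ i * pdE i Φ θ = 0 := by
    have : ∑ i : Fin n, 2 * β * θ i * pdE i Φ θ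
        = 2 * β * ∑ i, θ i * pdE i Φ θ := by
      rw [Finset.mul_sum]; exact Finset.sum_congr rfl fun i _ => by ring
    rw [this, heuler, mul_zero]
  rw [e1, e2, heig]
  have hΦθ : Φ θ = φ θ := by
    rw [hΦdef]
    simp [hθ1]
  rw [hΦθ]
  have hμ : β * (β - 2 + (n:ℝ)) = μ := by rw [← hβμ]; ring
  rw [hμ]; ring

end aux4

section aux5
variable {n : ℕ}

lemma pdE_diff {v : EuclideanSpace ℝ (Fin n) → ℝ} {x : EuclideanSpace ℝ (Fin n)}
    (hC : ContDiffAt ℝ (⊤ : ℕ∞) v x) (i : Fin n) : DifferentiableAt ℝ (pdE i v) x :=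
  (((hC.fderiv_right (m := 1) (by exact WithTop.coe_le_coe.mpr le_top)).clm_apply contDiffAt_const).differentiableAt one_ne_zero)

lemma lap_u_zero {β μ : ℝ} (hβμ : β * (β + (n:ℝ) - 2) = μ)
    {U : Set (EuclideanSpace ℝ (Fin n))} (hU : IsOpen U)
    (hU0 : (0 : EuclideanSpace ℝ (Fin n)) ∉ U)
    (hUcone : ∀ c : ℝ, 0 < c → ∀ x ∈ U, c • x ∈ U)
    {φ : EuclideanSpace ℝ (Fin n) → ℝ}
    (hφsmooth : ContDiffOn ℝ (⊤ : ℕ∞) (fun x => φ (‖x‖⁻¹ • x)) U)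
    (hφeig : ∀ θ ∈ U, ‖θ‖ = 1 → lapE (fun x => φ (‖x‖⁻¹ • x)) θ = -μ * φ θ)
    {x : EuclideanSpace ℝ (Fin n)} (hx : x ∈ U) :
    lapE (fun y => ‖y‖ ^ β * φ (‖y‖⁻¹ • y)) x = 0 := by
  have hx0 : x ≠ 0 := fun h => hU0 (h ▸ hx)
  have hc : (0:ℝ) < ‖x‖ := norm_pos_iff.mpr hx0
  set θ : EuclideanSpace ℝ (Fin n) := ‖x‖⁻¹ • x with hθdef
  have hθU : θ ∈ U := hUcone _ (by positivity) x hx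
  have hθ1 : ‖θ‖ = 1 := by
    rw [hθdef, norm_smul, Real.norm_eq_abs, abs_of_pos (by positivity)]
    field_simp
  have hxθ : x = ‖x‖ • θ := by
    rw [hθdef, smul_smul, mul_inv_cancel₀ hc.ne', one_smul]
  set u : EuclideanSpace ℝ (Fin n) → ℝ := fun y => ‖y‖ ^ β * φ (‖y‖⁻¹ • y) with hudef
  have hv : ∀ c : ℝ, 0 < c → ∀ y, u (c • y) = c ^ β * u y := fun c hcc y => u_hom φ β c hcc y
  have hv1 : ∀ i : Fin n, ∀ c : ℝ, 0 < c → ∀ y, pdE i u (c • y) = c ^ (β - 1) * pdE i u y :=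
    fun i c hcc y => pd_homog hv hcc y i
  have hkey : ∀ i : Fin n, pdE i (pdE i u) x = ‖x‖ ^ (β - 1 - 1) * pdE i (pdE i u) θ := by
    intro i
    conv_lhs => rw [hxθ]
    exact pd_homog (fun c hcc y => hv1 i c hcc y) hc θ i
  unfold lapE
  have : ∑ i, pdE i (pdE i u) x = ‖x‖ ^ (β - 1 - 1) * ∑ i, pdE i (pdE i u) θ := by
    rw [Finset.mul_sum]
    exact Finset.sum_congr rfl fun i _ => hkey i
  rw [this]
  have := lap_u_unit hβμ hU hU0 hφsmooth hφeig hθU hθ1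
  unfold lapE at this
  rw [this, mul_zero]

end aux5

/-- if `β > 0` solves `β(β+n-2) = μ`, `φ` is a smooth positive
function on an open cone-like subset of the sphere with `Δ_{S^{n-1}} φ = -μ φ`
(the spherical Laplacian being realized as the ambient Laplacian of the
`0`-homogeneous extension), `γ ∈ (0,1)` and `a = 1-2γ`, then
`ψ(x,λ) = (1+λ^{2γ}) |x|^β φ(x/|x|)` satisfies `div(λ^a ∇ψ) = 0` where defined. -/
theorem lambda_a_harmonic_barrier (n : ℕ) (hn : 2 ≤ n) (γ : ℝ)
    (hγ : γ ∈ Set.Ioo (0 : ℝ) 1) (a β μ : ℝ) (ha : a = 1 - 2 * γ) (hβ : 0 < β)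
    (hβμ : β * (β + (n : ℝ) - 2) = μ)
    (U : Set (EuclideanSpace ℝ (Fin n))) (hU : IsOpen U)
    (hU0 : (0 : EuclideanSpace ℝ (Fin n)) ∉ U)
    (hUcone : ∀ c : ℝ, 0 < c → ∀ x ∈ U, c • x ∈ U)
    (φ : EuclideanSpace ℝ (Fin n) → ℝ)
    (hφsmooth : ContDiffOn ℝ (⊤ : ℕ∞) (fun x => φ (‖x‖⁻¹ • x)) U)
    (hφpos : ∀ x ∈ U, 0 < φ (‖x‖⁻¹ • x))
    (hφeig : ∀ θ ∈ U, ‖θ‖ = 1 → lapE (fun x => φ (‖x‖⁻¹ • x)) θ = -μ * φ θ) :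
    ∀ x ∈ U, ∀ l : ℝ, 0 < l →
      divExt a
        (fun p : EuclideanSpace ℝ (Fin n) × ℝ =>
          (1 + p.2 ^ (2 * γ)) * ‖p.1‖ ^ β * φ (‖p.1‖⁻¹ • p.1)) (x, l) = 0 := by
  intro x hx l hl
  have hx0 : x ≠ 0 := fun h => hU0 (h ▸ hx)
  have hnx : (0:ℝ) < ‖x‖ := norm_pos_iff.mpr hx0
  set Φ : EuclideanSpace ℝ (Fin n) → ℝ := fun y => φ (‖y‖⁻¹ • y) with hΦdef
  set u : EuclideanSpace ℝ (Fin n) → ℝ := fun y => ‖y‖ ^ β * Φ y with hudef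
  set ψ : EuclideanSpace ℝ (Fin n) × ℝ → ℝ :=
    fun p => (1 + p.2 ^ (2 * γ)) * ‖p.1‖ ^ β * φ (‖p.1‖⁻¹ • p.1) with hψdef
  have hΦat : ∀ y ∈ U, ContDiffAt ℝ (⊤ : ℕ∞) Φ y := fun y hy => hφsmooth.contDiffAt (hU.mem_nhds hy)
  have hNsm : ContDiffAt ℝ (⊤ : ℕ∞) (fun z : EuclideanSpace ℝ (Fin n) => ‖z‖ ^ β) x := by
    have h1 : ContDiffAt ℝ (⊤ : ℕ∞) (fun z : EuclideanSpace ℝ (Fin n) => ‖z‖) x :=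
      contDiffAt_id.norm ℝ hx0
    exact h1.rpow_const_of_ne (norm_ne_zero_iff.mpr hx0)
  have hCu : ContDiffAt ℝ (⊤ : ℕ∞) u x := hNsm.mul (hΦat x hx)
  have hud : ∀ y ∈ U, DifferentiableAt ℝ u y := by
    intro y hy
    have hy0 : y ≠ 0 := fun h => hU0 (h ▸ hy)
    exact (hasFDerivAt_normrpow β hy0).differentiableAt.mul
      ((hΦat y hy).differentiableAt (by simp))
  -- horizontal terms
  have hHi : ∀ i : Fin n, pdx i (fun q => q.2 ^ a * pdx i ψ q) (x, l)
      = (l ^ a * (1 + l ^ (2 * γ))) * pdE i (pdE i u) x := by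
    intro i
    have hpsix : ∀ y ∈ U, pdx i ψ (y, l) = (1 + l ^ (2 * γ)) * pdE i u y := by
      intro y hy
      show fderiv ℝ (fun z => ψ (z, l)) y (EuclideanSpace.single i 1) = _
      have heq : (fun z => ψ (z, l)) = fun z => (1 + l ^ (2 * γ)) * u z := by
        funext z
        show (1 + l ^ (2 * γ)) * ‖z‖ ^ β * φ (‖z‖⁻¹ • z) = _
        simp only [hudef, hΦdef]; ring
      rw [heq, fderiv_const_mul (hud y hy)]
      simp [pdE]
    have hev : (fun y => l ^ a * pdx i ψ (y, l)) =ᶠ[nhds x]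
        fun y => (l ^ a * (1 + l ^ (2 * γ))) * pdE i u y := by
      filter_upwards [hU.mem_nhds hx] with y hy
      rw [hpsix y hy]; ring
    show fderiv ℝ (fun y => l ^ a * pdx i ψ (y, l)) x (EuclideanSpace.single i 1) = _
    rw [hev.fderiv_eq, fderiv_const_mul (pdE_diff hCu i)]
    simp [pdE]
  have hH : (∑ i, pdx i (fun q => q.2 ^ a * pdx i ψ q) (x, l)) = 0 := by
    rw [Finset.sum_congr rfl fun i _ => hHi i, ← Finset.mul_sum]
    have hz := lap_u_zero hβμ hU hU0 hUcone hφsmooth hφeig hx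
    unfold lapE at hz
    rw [hudef]
    rw [hΦdef] at *
    rw [hz, mul_zero]
  -- vertical term
  have hV : pdl (fun q => q.2 ^ a * pdl ψ q) (x, l) = 0 := by
    have hpsil : ∀ s : ℝ, 0 < s → pdl ψ (x, s) = 2 * γ * s ^ (2 * γ - 1) * u x := by
      intro s hs
      show deriv (fun t => ψ (x, t)) s = _
      have heq : (fun t => ψ (x, t)) = fun t => (1 + t ^ (2 * γ)) * u x := by
        funext t
        show (1 + t ^ (2 * γ)) * ‖x‖ ^ β * φ (‖x‖⁻¹ • x) = _
        simp only [hudef, hΦdef]; ring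
      rw [heq]
      have hr : HasDerivAt (fun t : ℝ => (1 + t ^ (2 * γ)) * u x)
          ((2 * γ * s ^ (2 * γ - 1)) * u x) s := by
        have h0 := Real.hasDerivAt_rpow_const (x := s) (p := 2 * γ) (Or.inl hs.ne')
        exact (h0.const_add 1).mul_const (u x)
      rw [hr.deriv]
    show deriv (fun s => s ^ a * pdl ψ (x, s)) l = 0
    have hev : (fun s => s ^ a * pdl ψ (x, s)) =ᶠ[nhds l] fun _ => 2 * γ * u x := by
      filter_upwards [isOpen_Ioi.mem_nhds hl] with s hs
      rw [hpsil s hs]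
      have h0 : a + (2 * γ - 1) = 0 := by rw [ha]; ring
      calc s ^ a * (2 * γ * s ^ (2 * γ - 1) * u x)
          = s ^ a * s ^ (2 * γ - 1) * (2 * γ * u x) := by ring
        _ = 2 * γ * u x := by
            rw [← Real.rpow_add hs, h0, Real.rpow_zero, one_mul]
    rw [hev.deriv_eq, deriv_const]
  show (∑ i, pdx i (fun q => q.2 ^ a * pdx i ψ q) (x, l))
      + pdl (fun q => q.2 ^ a * pdl ψ q) (x, l) = 0
  rw [hH, hV, add_zero]
end
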